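/- For any TIOTS P with triple-trace structure (I, O, TT, TR, TE): (1) TE is extension-closed (tt ∈ TE and tt ≤ tt' imply tt' ∈ TE); (2) TT is non-empty and prefix-closed; (3) TR is prefix-closed and fully branching with respect to TT, i.e. tt · ⟨α⟩ ∈ TT for every tt ∈ TR and every timed action α ∈ tA; (4) TT ∖ TR is time-extension closed (tt ∈ TT ∖ TR implies tt · ⟨d⟩ ∈ TT ∖ TR for every d ∈ ℝ>0); and (5) any two traces in TT ∖ TR related by extension are related by time-extension. -/

import Mathlib

open Classical

namespace TSpec

/-- Positive real time delays. -/
abbrev Delay : Type := {d : ℝ // 0 < d}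

/-- Sum of two positive delays. -/
def dsum (d e : Delay) : Delay := ⟨d.1 + e.1, add_pos d.2 e.2⟩

/-- Timed actions over an action alphabet `Act`: visible actions or positive delays. -/
inductive TAct (Act : Type) : Type where
  | act : Act → TAct Act
  | delay : Delay → TAct Act

/-- A timed action is a delay. -/
def TAct.isDelay {Act : Type} : TAct Act → Prop
  | .act _ => False
  | .delay _ => True

/-- A timed action is valid for a set `A` of visible actions:
visible actions must belong to `A`, delays are always valid.
(For `A = O` this expresses membership in the timed outputs `tO = O ⊎ ℝ>0`,
for `A = I ∪ O` membership in the timed alphabet `tA`.) -/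
def TAct.valid {Act : Type} (A : Set Act) : TAct Act → Prop
  | .act a => a ∈ A
  | .delay _ => True

/-- Timed words: finite sequences of timed actions. -/
abbrev TWord (Act : Type) := List (TAct Act)

/-- Well-formed timed word: no two adjacent delays (reals). -/
def IsTWord {Act : Type} (w : TWord Act) : Prop :=
  List.Chain' (fun x y => ¬ (TAct.isDelay x ∧ TAct.isDelay y)) w

/-- Well-formed timed word over the alphabet `A`. -/
def ValidW {Act : Type} (A : Set Act) (w : TWord Act) : Prop :=
  IsTWord w ∧ ∀ α ∈ w, TAct.valid A α

/-- Concatenation of timed words, coalescing (summing) adjacent delays. -/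
def tcat {Act : Type} (w w' : TWord Act) : TWord Act :=
  match w.getLast?, w' with
  | some (TAct.delay d), TAct.delay e :: rest => w.dropLast ++ TAct.delay (dsum d e) :: rest
  | _, _ => w ++ w'

/-- `Pref w₀ w`: `w₀` is a prefix of `w` (w.r.t. coalescing concatenation). -/
def Pref {Act : Type} (w₀ w : TWord Act) : Prop := ∃ w₁, tcat w₀ w₁ = w

/-- Strict prefix. -/
def SPref {Act : Type} (w₀ w : TWord Act) : Prop := Pref w₀ w ∧ w₀ ≠ w

/-- `X · tA*`: all extensions of words in `X` by timed words over the alphabet `A`. -/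
def Ext {Act : Type} (A : Set Act) (X : Set (TWord Act)) : Set (TWord Act) :=
  {w | ∃ w₀ ∈ X, ∃ w₁, ValidW A w₁ ∧ w = tcat w₀ w₁}

/-- `X · ℝ≥0`: all extensions of words in `X` by a (possibly zero) delay. -/
def ExtDelay {Act : Type} (X : Set (TWord Act)) : Set (TWord Act) :=
  X ∪ {w | ∃ w₀ ∈ X, ∃ d : Delay, w = tcat w₀ [TAct.delay d]}

/-- `w` is a time-extension of `w₀`: equal, or extended by a single delay. -/
def TimeExt {Act : Type} (w₀ w : TWord Act) : Prop :=
  w = w₀ ∨ ∃ d : Delay, w = tcat w₀ [TAct.delay d]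

/-- States of a TIOTS: plain states together with the inconsistent state `⊥`
and the timestop state `⊤`. -/
inductive St (σ : Type) : Type where
  | plain : σ → St σ
  | bot : St σ
  | top : St σ

/-- Map a function on plain states over `St`, preserving `⊥` and `⊤`. -/
def St.map {σ τ : Type} (f : σ → τ) : St σ → St τ
  | .plain p => .plain (f p)
  | .bot => .bot
  | .top => .top

/-- Interchange `⊤` and `⊥`. -/
def St.swap {σ : Type} : St σ → St σ
  | .plain p => .plain p
  | .bot => .top
  | .top => .bot

/-- Timed I/O transition system over action alphabet `Act`:
inputs `I`, outputs `O`, plain-state type `Sig`, initial state, and a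
transition relation labelled by timed actions. -/
structure TIOTS (Act : Type) : Type 1 where
  Sig : Type
  I : Set Act
  O : Set Act
  init : St Sig
  tr : St Sig → TAct Act → St Sig → Prop

/-- Full (visible) alphabet of a TIOTS. -/
def TIOTS.A {Act : Type} (P : TIOTS Act) : Set Act := P.I ∪ P.O

/-- Well-formedness: disjoint inputs/outputs, alphabet-respecting transitions,
`⊤` quiescent (exactly the delay self-loops), `⊥` chaotic (exactly the
self-loops for each timed action of the alphabet), and time additivity. -/
def WF {Act : Type} (P : TIOTS Act) : Prop :=
  Disjoint P.I P.O ∧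
  (∀ s α s', P.tr s α s' → TAct.valid P.A α) ∧
  (∀ α (s' : St P.Sig), P.tr .top α s' ↔ (TAct.isDelay α ∧ s' = .top)) ∧
  (∀ α (s' : St P.Sig), P.tr .bot α s' ↔ (TAct.valid P.A α ∧ s' = .bot)) ∧
  (∀ (p : P.Sig) (d e : Delay) (s' : St P.Sig),
      P.tr (.plain p) (.delay (dsum d e)) s' ↔
        ∃ s, P.tr (.plain p) (.delay d) s ∧ P.tr s (.delay e) s')

/-- Determinism: no ambiguous transitions. -/
def Deterministic {Act : Type} (P : TIOTS Act) : Prop :=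
  ∀ s α s' s'', P.tr s α s' → P.tr s α s'' → s' = s''

/-- `α` is enabled at state `s`. -/
def enabled {Act : Type} (P : TIOTS Act) (s : St P.Sig) (α : TAct Act) : Prop :=
  ∃ s', P.tr s α s'

/-- `⊥`-completion: add `p →a ⊥` for every plain state `p` and input `a` not enabled at `p`. -/
def botComplete {Act : Type} (P : TIOTS Act) : TIOTS Act :=
  { P with
    tr := fun s α s' =>
      P.tr s α s' ∨
        ((∃ p, s = St.plain p) ∧ (∃ a ∈ P.I, α = TAct.act a) ∧ ¬ enabled P s α ∧ s' = .bot) }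

/-- `⊤`-completion: add `p →α ⊤` for every plain state `p` and timed output `α ∈ tO`
not enabled at `p`. -/
def topComplete {Act : Type} (P : TIOTS Act) : TIOTS Act :=
  { P with
    tr := fun s α s' =>
      P.tr s α s' ∨
        ((∃ p, s = St.plain p) ∧ TAct.valid P.O α ∧ ¬ enabled P s α ∧ s' = .top) }

/-- `(P^⊥)^⊤`. -/
def TIOTS.complete {Act : Type} (P : TIOTS Act) : TIOTS Act := topComplete (botComplete P)

/-- Finite executions: `Exec P s w s'` holds when there is a finite execution from
`s` to `s'` whose trace (labels with adjacent delays coalesced) is `w`. -/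
inductive Exec {Act : Type} (P : TIOTS Act) : St P.Sig → TWord Act → St P.Sig → Prop where
  | nil (s : St P.Sig) : Exec P s [] s
  | cons {s : St P.Sig} {α : TAct Act} {s' : St P.Sig} {w : TWord Act} {s'' : St P.Sig} :
      P.tr s α s' → Exec P s' w s'' → Exec P s (tcat [α] w) s''

/-- `s` is reachable from the initial state via trace `w`. -/
def Reach {Act : Type} (P : TIOTS Act) (w : TWord Act) (s : St P.Sig) : Prop :=
  Exec P P.init w s

/-- `⊥`-freeness: `⊥` is not reachable from the initial state. -/
def BotFree {Act : Type} (P : TIOTS Act) : Prop := ∀ w, ¬ Reach P w .bot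

/-- Error traces of `P`: traces of `(P^⊥)^⊤` leading to `⊥`. -/
def TEset {Act : Type} (P : TIOTS Act) : Set (TWord Act) := {w | Reach P.complete w .bot}

/-- Magic traces of `P`: traces of `(P^⊥)^⊤` leading to `⊤`. -/
def TMset {Act : Type} (P : TIOTS Act) : Set (TWord Act) := {w | Reach P.complete w .top}

/-- Plain traces of `P`: traces of `(P^⊥)^⊤` leading to a plain state. -/
def TPset {Act : Type} (P : TIOTS Act) : Set (TWord Act) :=
  {w | ∃ p, Reach P.complete w (St.plain p)}

/-- Realisable traces: `TR = TE ∪ TP`. -/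
def TRset {Act : Type} (P : TIOTS Act) : Set (TWord Act) := TEset P ∪ TPset P

/-- All traces: `TT = TE ∪ TP ∪ TM`. -/
def TTset {Act : Type} (P : TIOTS Act) : Set (TWord Act) := TEset P ∪ TPset P ∪ TMset P

/-- Composite plain-state space for binary operators: lone left states, lone right
states, and product states. -/
def CState (σ₀ σ₁ : Type) : Type := σ₀ ⊕ σ₁ ⊕ σ₀ × σ₁

def pairSt {σ₀ σ₁ : Type} (p : σ₀) (q : σ₁) : CState σ₀ σ₁ := Sum.inr (Sum.inr (p, q))

def embL {σ₀ σ₁ : Type} : St σ₀ → St (CState σ₀ σ₁) := St.map (fun p => Sum.inl p)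

def embR {σ₀ σ₁ : Type} : St σ₁ → St (CState σ₀ σ₁) := St.map (fun q => Sum.inr (Sum.inl q))

/-- State table for parallel composition: `⊤` if either is `⊤`, otherwise `⊥`
if either is `⊥`, otherwise the pair. -/
def stPar {σ₀ σ₁ : Type} : St σ₀ → St σ₁ → St (CState σ₀ σ₁)
  | .top, _ => .top
  | _, .top => .top
  | .bot, _ => .bot
  | _, .bot => .bot
  | .plain p, .plain q => .plain (pairSt p q)

/-- State table for conjunction: `⊤` if either is `⊤`, otherwise the other
operand if either is `⊥`, otherwise the pair. -/
def stAnd {σ₀ σ₁ : Type} : St σ₀ → St σ₁ → St (CState σ₀ σ₁)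
  | .top, _ => .top
  | _, .top => .top
  | .bot, .bot => .bot
  | .bot, .plain q => .plain (Sum.inr (Sum.inl q))
  | .plain p, .bot => .plain (Sum.inl p)
  | .plain p, .plain q => .plain (pairSt p q)

/-- State table for disjunction: `⊥` if either is `⊥`, otherwise the other
operand if either is `⊤`, otherwise the pair. -/
def stOr {σ₀ σ₁ : Type} : St σ₀ → St σ₁ → St (CState σ₀ σ₁)
  | .bot, _ => .bot
  | _, .bot => .bot
  | .top, .top => .top
  | .top, .plain q => .plain (Sum.inr (Sum.inl q))
  | .plain p, .top => .plain (Sum.inl p)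
  | .plain p, .plain q => .plain (pairSt p q)

/-- State table for quotient `s₀ % s₁`: `⊥` if `s₁ = ⊤`, or if `s₀ = ⊥` and `s₁ ≠ ⊤`;
`⊤` if `s₁ = ⊥` and `s₀ ≠ ⊥`, or if `s₀ = ⊤` and `s₁` plain; the pair if both plain. -/
def stQuo {σ₀ σ₁ : Type} : St σ₀ → St σ₁ → St (CState σ₀ σ₁)
  | _, .top => .bot
  | .bot, _ => .bot
  | _, .bot => .top
  | .top, .plain _ => .top
  | .plain p, .plain q => .plain (pairSt p q)

/-- Synchronised product of two (already `⊥`- and `⊤`-completed) TIOTSs, with the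
given state-combination table and alphabets. The transition relation contains the
embedded component transitions (on lone states); from product states, shared
actions and all delays synchronise while independent visible actions interleave;
`⊥` is chaotic and `⊤` quiescent. -/
def rawProd {Act : Type} (P Q : TIOTS Act)
    (comb : St P.Sig → St Q.Sig → St (CState P.Sig Q.Sig)) (I O : Set Act) : TIOTS Act where
  Sig := CState P.Sig Q.Sig
  I := I
  O := O
  init := comb P.init Q.init
  tr := fun s α s' =>
    (∃ p s₀, s = St.plain (Sum.inl p) ∧ P.tr (.plain p) α s₀ ∧ s' = embL s₀) ∨
    (∃ q s₁, s = St.plain (Sum.inr (Sum.inl q)) ∧ Q.tr (.plain q) α s₁ ∧ s' = embR s₁) ∨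
    (∃ p q, s = St.plain (pairSt p q) ∧
      ((TAct.valid (P.A ∩ Q.A) α ∧
          ∃ (s₀ : St P.Sig) (s₁ : St Q.Sig),
            P.tr (.plain p) α s₀ ∧ Q.tr (.plain q) α s₁ ∧ s' = comb s₀ s₁) ∨
       (∃ a, α = TAct.act a ∧ a ∈ P.A \ Q.A ∧
          ∃ s₀ : St P.Sig, P.tr (.plain p) α s₀ ∧ s' = comb s₀ (.plain q)) ∨
       (∃ a, α = TAct.act a ∧ a ∈ Q.A \ P.A ∧
          ∃ s₁ : St Q.Sig, Q.tr (.plain q) α s₁ ∧ s' = comb (.plain p) s₁))) ∨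
    (s = .bot ∧ TAct.valid (I ∪ O) α ∧ s' = .bot) ∨
    (s = .top ∧ TAct.isDelay α ∧ s' = .top)

/-- Parallel composition `P ∥ Q` (requires `∥`-composability: disjoint output sets). -/
def parC {Act : Type} (P Q : TIOTS Act) : TIOTS Act :=
  rawProd P.complete Q.complete stPar ((P.I ∪ Q.I) \ (P.O ∪ Q.O)) (P.O ∪ Q.O)

/-- Conjunction `P ∧ Q` (requires identical alphabets). -/
def andC {Act : Type} (P Q : TIOTS Act) : TIOTS Act :=
  rawProd P.complete Q.complete stAnd P.I P.O

/-- Disjunction `P ∨ Q` (requires identical alphabets). -/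
def orC {Act : Type} (P Q : TIOTS Act) : TIOTS Act :=
  rawProd P.complete Q.complete stOr P.I P.O

/-- Reduction of a subset of states in the subset construction: a subset containing
`⊥` becomes `⊥`; `⊤` is removed from any subset other than `{⊤}`. -/
noncomputable def detSt {σ : Type} (X : Set (St σ)) : St (Set σ) :=
  if St.bot ∈ X then .bot
  else if X = {St.top} then .top
  else .plain {p | St.plain p ∈ X}

/-- Successor subset. -/
def post {Act : Type} (P : TIOTS Act) (X : Set P.Sig) (α : TAct Act) : Set (St P.Sig) :=
  {s' | ∃ p ∈ X, P.tr (.plain p) α s'}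

/-- Determinisation `P^D` by subset construction on `(P^⊥)^⊤`. -/
noncomputable def TIOTS.det {Act : Type} (P : TIOTS Act) : TIOTS Act where
  Sig := Set P.Sig
  I := P.I
  O := P.O
  init := detSt {P.complete.init}
  tr := fun s α s' =>
    (∃ X, s = St.plain X ∧ TAct.valid P.A α ∧ s' = detSt (post P.complete X α)) ∨
    (s = .bot ∧ TAct.valid P.A α ∧ s' = .bot) ∨
    (s = .top ∧ TAct.isDelay α ∧ s' = .top)

/-- Mirror `P¬`: determinise, then interchange inputs with outputs and `⊤` with `⊥`. -/
noncomputable def TIOTS.mirror {Act : Type} (P : TIOTS Act) : TIOTS Act where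
  Sig := (P.det).Sig
  I := P.O
  O := P.I
  init := St.swap (P.det).init
  tr := fun s α s' => (P.det).tr (St.swap s) α (St.swap s')

/-- Alphabet domination: `A_Q ⊆ A_P` and `O_Q ⊆ O_P`. -/
def Dominates {Act : Type} (P Q : TIOTS Act) : Prop := Q.A ⊆ P.A ∧ Q.O ⊆ P.O

/-- Quotient `P % Q` (requires that `P` dominates `Q`); `Q` is determinised first. -/
noncomputable def quoC {Act : Type} (P Q : TIOTS Act) : TIOTS Act :=
  rawProd P.complete (Q.det).complete stQuo (P.I ∪ Q.O) (P.O \ Q.O)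

/-- `Q` is an environment for `P`: complementary alphabets. -/
def Env {Act : Type} (P Q : TIOTS Act) : Prop := Q.I = P.O ∧ Q.O = P.I

/-- Substitutive refinement: `Refines P Q` means `P ⊑ Q`, i.e. the alphabets agree and
for every environment `R`, `⊥`-freeness of `P ∥ R` implies `⊥`-freeness of `Q ∥ R`. -/
def Refines {Act : Type} (P Q : TIOTS Act) : Prop :=
  P.I = Q.I ∧ P.O = Q.O ∧
  ∀ R : TIOTS Act, WF R → Env P R → BotFree (parC P R) → BotFree (parC Q R)

/-- Substitutive equivalence `P ≃ Q`. -/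
def SEquiv {Act : Type} (P Q : TIOTS Act) : Prop := Refines P Q ∧ Refines Q P

/-- Enabled timed actions at a plain state. -/
def eb {Act : Type} (G : TIOTS Act) (p : G.Sig) : Set (TAct Act) :=
  {α | enabled G (.plain p) α}

/-- The component move(s) proposed at a plain state: enabled outputs and delays. -/
def mvSet {Act : Type} (G : TIOTS Act) (p : G.Sig) : Set (TAct Act) :=
  {α | enabled G (.plain p) α ∧ TAct.valid G.O α}

/-- One-step relation between plain states. -/
def plainStep {Act : Type} (G : TIOTS Act) (p p' : G.Sig) : Prop :=
  ∃ α, G.tr (.plain p) α (.plain p')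

/-- Tree TIOTS: acyclic (on plain states), no state is the target of both an action-
and a delay-transition, action transitions into the same state coincide, and delay
transitions into the same state have the same source. -/
def IsTree {Act : Type} (G : TIOTS Act) : Prop :=
  (∀ p, ¬ Relation.TransGen (plainStep G) p p) ∧
  (∀ p p' p'' a d, G.tr (.plain p) (TAct.act a) (.plain p'') →
      G.tr (.plain p') (TAct.delay d) (.plain p'') → False) ∧
  (∀ p p' p'' a b, G.tr (.plain p) (TAct.act a) (.plain p'') →
      G.tr (.plain p') (TAct.act b) (.plain p'') → p = p' ∧ a = b) ∧
  (∀ p p' p'' d, G.tr (.plain p) (TAct.delay d) (.plain p'') →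
      G.tr (.plain p') (TAct.delay d) (.plain p'') → p = p')

/-- Strategy: a deterministic tree TIOTS in which every plain state enables exactly
the inputs together with a unique component move, the move being a single output or
a nonempty set of delays. -/
def IsStrategy {Act : Type} (G : TIOTS Act) : Prop :=
  WF G ∧ Deterministic G ∧ IsTree G ∧
  ∀ p : G.Sig,
    eb G p = {α | ∃ a ∈ G.I, α = TAct.act a} ∪ mvSet G p ∧
    ((∃ a ∈ G.O, mvSet G p = {TAct.act a}) ∨
      ((mvSet G p).Nonempty ∧ ∀ α ∈ mvSet G p, TAct.isDelay α))

/-- `G` is a partial unfolding of `Q`: a state map preserving `⊥`, `⊤`, plainness,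
the initial state and the transitions. -/
def PartialUnfolding {Act : Type} (G Q : TIOTS Act) : Prop :=
  G.I = Q.I ∧ G.O = Q.O ∧
  ∃ f : G.Sig → Q.Sig,
    St.map f G.init = Q.init ∧
    ∀ (p : G.Sig) (α : TAct Act) (s' : St G.Sig),
      G.tr (.plain p) α s' → Q.tr (.plain (f p)) α (St.map f s')

/-- Strategies contained in `P`: partial unfoldings of `(P^⊥)^⊤`. -/
def stg {Act : Type} (P : TIOTS Act) : Set (TIOTS Act) :=
  {G | IsStrategy G ∧ PartialUnfolding G P.complete}

/-- Affinity: identical alphabets and equal proposed moves after equal traces. -/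
def Affine {Act : Type} (G G' : TIOTS Act) : Prop :=
  G.I = G'.I ∧ G.O = G'.O ∧
  ∀ (w : TWord Act) (p : G.Sig) (p' : G'.Sig),
    Reach G w (.plain p) → Reach G' w (.plain p') → mvSet G p = mvSet G' p'

/-- Aggressiveness order `G ≼ G'` on affine strategies: `G` reaches `⊥` faster and
`⊤` slower than `G'`. -/
def Agg {Act : Type} (G G' : TIOTS Act) : Prop :=
  Affine G G' ∧
  (∀ w, Reach G' w .bot → ∃ w₀, Pref w₀ w ∧ Reach G w₀ .bot) ∧
  (∀ w, Reach G w .top → ∃ w₀, Pref w₀ w ∧ Reach G' w₀ .top)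

/-- Strategy semantics `[P]_s`: upward closure of `stg(P)` w.r.t. `≼`. -/
def ssem {Act : Type} (P : TIOTS Act) : Set (TIOTS Act) :=
  {G' | IsStrategy G' ∧ ∃ G ∈ stg P, Agg G G'}

/-- Strategy disjunction `G + G'` of (affine) strategies: their synchronised
`∨`-product, without further completion. -/
def stratPlus {Act : Type} (G G' : TIOTS Act) : TIOTS Act := rawProd G G' stOr G.I G.O

/-- Isomorphism of TIOTSs. -/
def TIso {Act : Type} (P Q : TIOTS Act) : Prop :=
  P.I = Q.I ∧ P.O = Q.O ∧
  ∃ e : P.Sig ≃ Q.Sig,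
    St.map (fun x => e x) P.init = Q.init ∧
    ∀ s α s', P.tr s α s' ↔ Q.tr (St.map (fun x => e x) s) α (St.map (fun x => e x) s')

/-- Disjunction closure of a set of strategies (strategies are identified up to
isomorphism): least superset closed under `+` of affine pairs. -/
inductive DClos {Act : Type} (S : Set (TIOTS Act)) : TIOTS Act → Prop where
  | base {G} : G ∈ S → DClos S G
  | disj {G G'} : DClos S G → DClos S G' → Affine G G' → DClos S (stratPlus G G')
  | iso {G G'} : DClos S G → TIso G G' → DClos S G'

/-- Disjunction closure `Π⁺` as a set. -/
def dclos {Act : Type} (S : Set (TIOTS Act)) : Set (TIOTS Act) := {G | DClos S G}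

/-- `[P]_s⁺`. -/
def sClos {Act : Type} (P : TIOTS Act) : Set (TIOTS Act) := dclos (ssem P)

/-- Coin strategies: functions from histories to `{0,1}`. -/
abbrev Coin (Act : Type) := TWord Act → Bool

/-- The strategy proposes output `a` at `p`. -/
def proposesA {Act : Type} (G : TIOTS Act) (p : G.Sig) (a : Act) : Prop :=
  TAct.act a ∈ mvSet G p

/-- The strategy proposes delay `d` at `p`. -/
def proposesD {Act : Type} (G : TIOTS Act) (p : G.Sig) (d : Delay) : Prop :=
  TAct.delay d ∈ mvSet G p

/-- Game-state combination for plays (game states carry the history). -/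
def stPlay {Act : Type} {σ₀ σ₁ : Type} (w : TWord Act) :
    St σ₀ → St σ₁ → St (σ₀ × σ₁ × TWord Act)
  | .top, _ => .top
  | _, .top => .top
  | .bot, _ => .bot
  | _, .bot => .bot
  | .plain p, .plain q => .plain (p, q, w)

/-- A component fires `α` if `α` is in its timed alphabet, and stays put otherwise. -/
def stepOrStay {Act : Type} (G : TIOTS Act) (p : G.Sig) (α : TAct Act) (s : St G.Sig) : Prop :=
  (TAct.valid G.A α ∧ G.tr (.plain p) α s) ∨ (¬ TAct.valid G.A α ∧ s = .plain p)

/-- Inputs that fire autonomously at a game state: synchronised inputs and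
independent inputs. -/
def firedInput {Act : Type} (GP GQ : TIOTS Act) (a : Act) : Prop :=
  a ∈ GP.I ∩ GQ.I ∨ (a ∈ GP.I ∪ GQ.I ∧ a ∉ GP.A ∩ GQ.A)

/-- The timed action `α` fires at game state `(p, q)` with history `w`: it is a fired
input, or a prevailing component move (an action prevails over a delay, the common
delays prevail when both propose delays, and the coin `h` resolves ties between two
proposed actions: `false` lets the left strategy win). -/
def fired {Act : Type} (GP GQ : TIOTS Act) (h : Coin Act) (p : GP.Sig) (q : GQ.Sig)
    (w : TWord Act) : TAct Act → Prop
  | TAct.act a =>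
      firedInput GP GQ a ∨
      (proposesA GP p a ∧ ((∃ b, proposesA GQ q b) → h w = false)) ∨
      (proposesA GQ q a ∧ ((∃ b, proposesA GP p b) → h w = true))
  | TAct.delay d => proposesD GP p d ∧ proposesD GQ q d

/-- The play `G_P ∥_h G_Q` of two strategies with composable alphabets against a
coin strategy `h`: a tree TIOTS over game states carrying histories. -/
def play {Act : Type} (GP GQ : TIOTS Act) (h : Coin Act) : TIOTS Act where
  Sig := GP.Sig × GQ.Sig × TWord Act
  I := (GP.I ∪ GQ.I) \ (GP.O ∪ GQ.O)
  O := GP.O ∪ GQ.O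
  init := stPlay [] GP.init GQ.init
  tr := fun s α s' =>
    (∃ p q w, s = St.plain (p, q, w) ∧ fired GP GQ h p q w α ∧
      ∃ (s₀ : St GP.Sig) (s₁ : St GQ.Sig),
        stepOrStay GP p α s₀ ∧ stepOrStay GQ q α s₁ ∧
        s' = stPlay (tcat w [α]) s₀ s₁) ∨
    (s = .bot ∧ TAct.valid (GP.A ∪ GQ.A) α ∧ s' = .bot) ∨
    (s = .top ∧ TAct.isDelay α ∧ s' = .top)

/-- Projection of a timed word onto a sub-alphabet: delete visible actions outside
the sub-alphabet and coalesce adjacent delays. -/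
noncomputable def projW {Act : Type} (A : Set Act) (w : TWord Act) : TWord Act :=
  w.foldr (fun α acc =>
    match α with
    | TAct.act a => if a ∈ A then tcat [TAct.act a] acc else acc
    | TAct.delay d => tcat [TAct.delay d] acc) []



/-! ### Auxiliary lemmas -/

section Aux

variable {Act : Type}

lemma nil_tcat (w : TWord Act) : tcat [] w = w := by
  cases w with
  | nil => rfl
  | cons a t => cases a <;> rfl

lemma tcat_nil (w : TWord Act) : tcat w [] = w := by
  unfold tcat; split
  · simp_all
  · simp

lemma tcat_eq_nil {w₀ w₁ : TWord Act} (h : tcat w₀ w₁ = []) : w₀ = [] ∧ w₁ = [] := by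
  unfold tcat at h; split at h
  · simp at h
  · simp_all

lemma tcat_cons (β : TAct Act) {rest : TWord Act} (w : TWord Act) (h : rest ≠ []) :
    tcat (β :: rest) w = β :: tcat rest w := by
  obtain ⟨r1, rs, rfl⟩ : ∃ r1 rs, rest = r1 :: rs := by
    cases rest with | nil => exact absurd rfl h | cons a b => exact ⟨a, b, rfl⟩
  unfold tcat
  rw [List.getLast?_cons_cons]
  cases hl : (r1 :: rs).getLast? with
  | none => simp at hl
  | some x =>
    cases x with
    | act a => simp
    | delay d =>
      cases w with
      | nil => simp
      | cons y ws =>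
        cases y with
        | act a => simp
        | delay e => simp [List.dropLast_cons_of_ne_nil]

lemma tcat_act (a : Act) (w : TWord Act) : tcat [TAct.act a] w = TAct.act a :: w := by
  cases w with
  | nil => rfl
  | cons y ws => cases y <;> rfl

lemma tcat_delay_delay (d e : Delay) (r : TWord Act) :
    tcat [TAct.delay d] (TAct.delay e :: r) = TAct.delay (dsum d e) :: r := rfl

lemma tcat_delay_nil (d : Delay) : tcat [TAct.delay d] ([] : TWord Act) = [TAct.delay d] := rfl

lemma tcat_delay_act (d : Delay) (a : Act) (r : TWord Act) :
    tcat [TAct.delay d] (TAct.act a :: r) = TAct.delay d :: TAct.act a :: r := rfl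

lemma tcat_single (α : TAct Act) (w : TWord Act)
    (h : ∀ d e r, α = TAct.delay d → w = TAct.delay e :: r → False) :
    tcat [α] w = α :: w := by
  cases α with
  | act a => exact tcat_act a w
  | delay d =>
    cases w with
    | nil => rfl
    | cons y ws =>
      cases y with
      | act a => rfl
      | delay e => exact absurd (h d e ws rfl rfl) (by simp)

lemma tcat_act_cons (a : Act) (l c : TWord Act) :
    tcat (TAct.act a :: l) c = TAct.act a :: tcat l c := by
  cases l with
  | nil => rw [tcat_act, nil_tcat]
  | cons x xs => exact tcat_cons _ _ (by simp)

lemma tcat_single_assoc (α : TAct Act) (b c : TWord Act) :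
    tcat (tcat [α] b) c = tcat [α] (tcat b c) := by
  cases b with
  | nil => rw [tcat_nil, nil_tcat]
  | cons hd tl =>
    cases α with
    | act a =>
      rw [tcat_act, tcat_act_cons, tcat_act]
    | delay d =>
      cases hd with
      | act a' =>
        rw [tcat_delay_act, tcat_cons _ _ (by simp), tcat_act_cons, tcat_delay_act]
      | delay e =>
        rw [tcat_delay_delay]
        cases tl with
        | nil =>
          cases c with
          | nil => rfl
          | cons y ws =>
            cases y with
            | act a => rfl
            | delay f =>
              rw [tcat_delay_delay, tcat_delay_delay, tcat_delay_delay]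
              congr 2
              simp [dsum, add_assoc]
        | cons t1 ts =>
          rw [tcat_cons (TAct.delay (dsum d e)) c (by simp),
            tcat_cons (TAct.delay e) c (by simp), tcat_delay_delay]

/-- head of `tcat (delay :: rest) w` is a delay -/
lemma tcat_head_delay (e1 : Delay) (rs w₁ : TWord Act) :
    ∃ e' r', tcat (TAct.delay e1 :: rs) w₁ = TAct.delay e' :: r' := by
  cases rs with
  | nil =>
    cases w₁ with
    | nil => exact ⟨e1, [], rfl⟩
    | cons y ws =>
      cases y with
      | act a => exact ⟨e1, _, rfl⟩
      | delay f => exact ⟨dsum e1 f, ws, rfl⟩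
  | cons r1 rrs => exact ⟨e1, _, tcat_cons _ _ (by simp)⟩

lemma istword_tcat_single (α : TAct Act) {w : TWord Act} (h : IsTWord w) :
    IsTWord (tcat [α] w) := by
  cases α with
  | act a =>
    rw [tcat_act]
    cases w with
    | nil => simp [IsTWord, List.Chain']
    | cons y ws =>
      exact List.isChain_cons_cons.mpr ⟨by simp [TAct.isDelay], h⟩
  | delay d =>
    cases w with
    | nil => rw [tcat_delay_nil]; simp [IsTWord, List.Chain']
    | cons y ws =>
      cases y with
      | act a =>
        exact List.isChain_cons_cons.mpr ⟨by simp [TAct.isDelay], h⟩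
      | delay e =>
        rw [tcat_delay_delay]
        cases ws with
        | nil => simp [IsTWord, List.Chain']
        | cons z zs =>
          have h' := List.isChain_cons_cons.mp h
          exact List.isChain_cons_cons.mpr ⟨by simpa [TAct.isDelay] using h'.1, h'.2⟩

lemma Exec.single {P : TIOTS Act} {s s' : St P.Sig} {α : TAct Act}
    (h : P.tr s α s') : Exec P s [α] s' := by
  have := Exec.cons h (Exec.nil s')
  rwa [tcat_nil] at this

lemma Exec.append {P : TIOTS Act} {s t u : St P.Sig} {w v : TWord Act}
    (h : Exec P s w t) (h' : Exec P t v u) : Exec P s (tcat w v) u := by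
  induction h with
  | nil => rwa [nil_tcat]
  | cons htr _ ih =>
    rw [tcat_single_assoc]
    exact Exec.cons htr (ih h')

lemma exec_istword {P : TIOTS Act} {s t : St P.Sig} {w : TWord Act}
    (h : Exec P s w t) : IsTWord w := by
  induction h with
  | nil => simp [IsTWord, List.Chain']
  | cons _ _ ih => exact istword_tcat_single _ ih

lemma exec_nil_eq {P : TIOTS Act} {s t : St P.Sig}
    (h : Exec P s [] t) : t = s := by
  generalize hw : ([] : TWord Act) = w' at h
  cases h with
  | nil => rfl
  | cons htr hex => exact absurd (tcat_eq_nil hw.symm).1 (by simp)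

lemma exec_act_cons {P : TIOTS Act} {s t : St P.Sig} {a : Act} {w₂ : TWord Act}
    (h : Exec P s (TAct.act a :: w₂) t) :
    ∃ m, P.tr s (TAct.act a) m ∧ Exec P m w₂ t := by
  generalize hw : TAct.act a :: w₂ = w at h
  cases h with
  | nil => simp at hw
  | cons htr hex =>
    rename_i α s' u
    have heq : tcat [α] u = TAct.act a :: w₂ := hw.symm ▸ rfl
    cases α with
    | act a' =>
      rw [tcat_act] at heq
      obtain ⟨h1, h2⟩ := List.cons.injEq .. ▸ heq
      cases h1
      exact ⟨s', htr, h2 ▸ hex⟩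
    | delay d =>
      exfalso
      cases u with
      | nil => simp [tcat_delay_nil] at heq
      | cons y ws =>
        cases y with
        | act a'' => simp [tcat_delay_act] at heq
        | delay e => simp [tcat_delay_delay] at heq

lemma exec_delay_cons {P : TIOTS Act} {s t : St P.Sig} {f : Delay} {w₂ : TWord Act}
    (h : Exec P s (TAct.delay f :: w₂) t) :
    ∃ m, Exec P s [TAct.delay f] m ∧ Exec P m w₂ t := by
  generalize hw : TAct.delay f :: w₂ = w at h
  induction h generalizing f w₂ with
  | nil => simp at hw
  | cons htr hex ih =>
    rename_i s₀ α s' u t₀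
    cases α with
    | act a => rw [tcat_act] at hw; simp at hw
    | delay g =>
      cases u with
      | nil =>
        rw [tcat_delay_nil] at hw
        obtain ⟨h1, h2⟩ := List.cons.injEq .. ▸ hw.symm
        cases TAct.delay.inj h1.symm
        exact ⟨s', Exec.single htr, h2 ▸ hex⟩
      | cons y ws =>
        cases y with
        | act a =>
          rw [tcat_delay_act] at hw
          obtain ⟨h1, h2⟩ := List.cons.injEq .. ▸ hw.symm
          cases TAct.delay.inj h1.symm
          exact ⟨s', Exec.single htr, h2 ▸ hex⟩
        | delay hh =>
          rw [tcat_delay_delay] at hw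
          obtain ⟨h1, h2⟩ := List.cons.injEq .. ▸ hw.symm
          obtain ⟨m, hm1, hm2⟩ := ih rfl
          refine ⟨m, ?_, h2 ▸ hm2⟩
          have := Exec.cons htr hm1
          rw [tcat_delay_delay] at this
          rwa [← h1]

end Aux

section CompleteLemmas

variable {Act : Type} {P : TIOTS Act}

lemma ctr_def (P : TIOTS Act) (s : St P.Sig) (α : TAct Act) (s' : St P.Sig) :
    P.complete.tr s α s' ↔
      ((P.tr s α s' ∨
        ((∃ p, s = St.plain p) ∧ (∃ a ∈ P.I, α = TAct.act a) ∧ ¬ enabled P s α ∧ s' = .bot)) ∨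
       ((∃ p, s = St.plain p) ∧ TAct.valid P.O α ∧
          ¬ enabled (botComplete P) s α ∧ s' = .top)) :=
  Iff.rfl

lemma botP_enabled_delay (s : St P.Sig) (d : Delay) :
    enabled (botComplete P) s (TAct.delay d) ↔ enabled P s (TAct.delay d) := by
  constructor
  · rintro ⟨s', h | ⟨_, ⟨a, _, heq⟩, _⟩⟩
    · exact ⟨s', h⟩
    · simp at heq
  · rintro ⟨s', h⟩
    exact ⟨s', Or.inl h⟩

lemma cbot_tr (hP : WF P) (α : TAct Act) (s' : St P.Sig) :
    P.complete.tr .bot α s' ↔ (TAct.valid P.A α ∧ s' = .bot) := by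
  refine (ctr_def P _ _ _).trans ?_
  constructor
  · rintro ((h | ⟨⟨p, hp⟩, _⟩) | ⟨⟨p, hp⟩, _⟩)
    · exact (hP.2.2.2.1 α s').mp h
    · exact absurd hp (by simp)
    · exact absurd hp (by simp)
  · intro h
    exact Or.inl (Or.inl ((hP.2.2.2.1 α s').mpr h))

lemma ctop_tr (hP : WF P) (α : TAct Act) (s' : St P.Sig) :
    P.complete.tr .top α s' ↔ (TAct.isDelay α ∧ s' = .top) := by
  refine (ctr_def P _ _ _).trans ?_
  constructor
  · rintro ((h | ⟨⟨p, hp⟩, _⟩) | ⟨⟨p, hp⟩, _⟩)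
    · exact (hP.2.2.1 α s').mp h
    · exact absurd hp (by simp)
    · exact absurd hp (by simp)
  · intro h
    exact Or.inl (Or.inl ((hP.2.2.1 α s').mpr h))

lemma cplain_enabled (hP : WF P) (p : P.Sig) (α : TAct Act) (hα : TAct.valid P.A α) :
    ∃ s', P.complete.tr (.plain p) α s' := by
  by_cases h : enabled (botComplete P) (.plain p) α
  · obtain ⟨s', hs'⟩ := h
    exact ⟨s', Or.inl hs'⟩
  · cases α with
    | act a =>
      have ha : a ∈ P.I ∪ P.O := hα
      rcases ha with ha | ha
      · exfalso
        apply h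
        by_cases he : enabled P (.plain p) (TAct.act a)
        · obtain ⟨s', hs'⟩ := he
          exact ⟨s', Or.inl hs'⟩
        · exact ⟨.bot, Or.inr ⟨⟨p, rfl⟩, ⟨a, ha, rfl⟩, he, rfl⟩⟩
      · exact ⟨.top, Or.inr ⟨⟨p, rfl⟩, ha, h, rfl⟩⟩
    | delay d =>
      exact ⟨.top, Or.inr ⟨⟨p, rfl⟩, trivial, h, rfl⟩⟩

lemma csplit (hP : WF P) {s s₁ : St P.Sig} {d e : Delay}
    (h : P.complete.tr s (TAct.delay (dsum d e)) s₁) :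
    ∃ m, P.complete.tr s (TAct.delay d) m ∧ P.complete.tr m (TAct.delay e) s₁ := by
  cases s with
  | bot =>
    obtain ⟨_, rfl⟩ := (cbot_tr hP _ _).mp h
    exact ⟨.bot, (cbot_tr hP _ _).mpr ⟨trivial, rfl⟩, (cbot_tr hP _ _).mpr ⟨trivial, rfl⟩⟩
  | top =>
    obtain ⟨_, rfl⟩ := (ctop_tr hP _ _).mp h
    exact ⟨.top, (ctop_tr hP _ _).mpr ⟨trivial, rfl⟩, (ctop_tr hP _ _).mpr ⟨trivial, rfl⟩⟩
  | plain p =>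
    rcases (ctr_def P _ _ _).mp h with (h | ⟨_, ⟨a, _, heq⟩, _⟩) | ⟨_, _, hne, rfl⟩
    · obtain ⟨m, h1, h2⟩ := (hP.2.2.2.2 p d e s₁).mp h
      exact ⟨m, Or.inl (Or.inl h1), Or.inl (Or.inl h2)⟩
    · simp at heq
    · have hne' : ¬ enabled P (.plain p) (TAct.delay (dsum d e)) :=
        fun hh => hne ((botP_enabled_delay _ _).mpr hh)
      by_cases hd : enabled P (.plain p) (TAct.delay d)
      · obtain ⟨m, hm⟩ := hd
        cases m with
        | bot =>
          exfalso
          exact hne' ⟨.bot, (hP.2.2.2.2 p d e .bot).mpr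
            ⟨.bot, hm, (hP.2.2.2.1 _ _).mpr ⟨trivial, rfl⟩⟩⟩
        | top =>
          exfalso
          exact hne' ⟨.top, (hP.2.2.2.2 p d e .top).mpr
            ⟨.top, hm, (hP.2.2.1 _ _).mpr ⟨trivial, rfl⟩⟩⟩
        | plain q =>
          have hqe : ¬ enabled P (.plain q) (TAct.delay e) := by
            rintro ⟨z, hz⟩
            exact hne' ⟨z, (hP.2.2.2.2 p d e z).mpr ⟨.plain q, hm, hz⟩⟩
          refine ⟨.plain q, Or.inl (Or.inl hm), Or.inr ⟨⟨q, rfl⟩, trivial, ?_, rfl⟩⟩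
          exact fun hh => hqe ((botP_enabled_delay _ _).mp hh)
      · refine ⟨.top, Or.inr ⟨⟨p, rfl⟩, trivial, ?_, rfl⟩,
          (ctop_tr hP _ _).mpr ⟨trivial, rfl⟩⟩
        exact fun hh => hd ((botP_enabled_delay _ _).mp hh)

lemma ctop_closed (hP : WF P) {s t : St P.complete.Sig} {v : TWord Act}
    (h : Exec P.complete s v t) (hs : s = .top) :
    t = .top ∧ (v = [] ∨ ∃ D : Delay, v = [TAct.delay D]) := by
  revert hs
  induction h with
  | nil => intro hs; exact ⟨hs, Or.inl rfl⟩
  | @cons s₀ α s' u t₀ htr hex ih =>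
    intro hs
    subst hs
    obtain ⟨hd, rfl⟩ := (ctop_tr hP _ _).mp htr
    obtain ⟨ht, hv⟩ := ih rfl
    refine ⟨ht, ?_⟩
    cases α with
    | act a => exact absurd hd (by simp [TAct.isDelay])
    | delay g =>
      rcases hv with rfl | ⟨D, rfl⟩
      · exact Or.inr ⟨g, by rw [tcat_delay_nil]⟩
      · exact Or.inr ⟨dsum g D, by rw [tcat_delay_delay]⟩

lemma cbot_exec (hP : WF P) (v : TWord Act) (h1 : IsTWord v)
    (h2 : ∀ α ∈ v, TAct.valid P.A α) :
    Exec P.complete .bot v .bot := by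
  induction v with
  | nil => exact Exec.nil _
  | cons α v' ih =>
    have htr : P.complete.tr .bot α .bot :=
      (cbot_tr hP _ _).mpr ⟨h2 α (by simp), rfl⟩
    have h1' : IsTWord v' := h1.tail
    have hex := Exec.cons htr (ih h1' (fun β hβ => h2 β (by simp [hβ])))
    rwa [tcat_single] at hex
    rintro d e r rfl rfl
    have := List.isChain_cons_cons.mp h1
    simp [TAct.isDelay] at this

lemma exec_delay_split (hP : WF P) {s t : St P.complete.Sig} {w : TWord Act}
    (h : Exec P.complete s w t) :
    ∀ (f : Delay) (x y : ℝ) (hx : 0 < x) (hy : 0 < y), f.1 = x + y →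
      w = [TAct.delay f] →
      ∃ m, Exec P.complete s [TAct.delay ⟨x, hx⟩] m ∧
        Exec P.complete m [TAct.delay ⟨y, hy⟩] t := by
  induction h with
  | nil => intro f x y hx hy hf hw; simp at hw
  | cons htr hex ih =>
    intro f x y hx hy hf hw
    rename_i s₀ α s' u t₀
    cases α with
    | act a => rw [tcat_act] at hw; simp at hw
    | delay g =>
      cases u with
      | nil =>
        rw [tcat_delay_nil] at hw
        obtain rfl : g = f := by simpa using hw
        have ht : t₀ = s' := exec_nil_eq hex
        subst ht
        have : (TAct.delay g : TAct Act) = TAct.delay (dsum ⟨x, hx⟩ ⟨y, hy⟩) := by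
          congr 1
          exact Subtype.ext hf
        rw [this] at htr
        obtain ⟨m, h1, h2⟩ := csplit hP htr
        exact ⟨m, Exec.single h1, Exec.single h2⟩
      | cons z ws =>
        cases z with
        | act a => rw [tcat_delay_act] at hw; simp at hw
        | delay hh =>
          rw [tcat_delay_delay] at hw
          obtain ⟨h1, h2⟩ := List.cons.injEq .. ▸ hw
          subst h2
          have hsum : g.1 + hh.1 = x + y := by
            have h3 := congrArg Subtype.val (TAct.delay.inj h1)
            simp [dsum] at h3
            linarith [hf]
          rcases lt_trichotomy g.1 x with hlt | heq | hgt
          · have hpos : (0 : ℝ) < x - g.1 := by linarith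
            have hh_eq : hh.1 = (x - g.1) + y := by linarith
            obtain ⟨m, e1, e2⟩ := ih hh (x - g.1) y hpos hy hh_eq rfl
            refine ⟨m, ?_, e2⟩
            have := Exec.cons htr e1
            rw [tcat_delay_delay] at this
            have hd : dsum g ⟨x - g.1, hpos⟩ = ⟨x, hx⟩ := by
              apply Subtype.ext
              simp [dsum]
            rwa [hd] at this
          · have hg : g = ⟨x, hx⟩ := Subtype.ext heq
            have hhy : hh = ⟨y, hy⟩ := Subtype.ext (by linarith)
            subst hg
            exact ⟨s', Exec.single htr, hhy ▸ hex⟩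
          · have hpos : (0 : ℝ) < g.1 - x := by linarith
            have hg : g = dsum ⟨x, hx⟩ ⟨g.1 - x, hpos⟩ := by
              apply Subtype.ext
              simp [dsum]
            rw [show TAct.delay g = TAct.delay (dsum ⟨x, hx⟩ ⟨g.1 - x, hpos⟩) from
              congrArg _ hg] at htr
            obtain ⟨m, t1, t2⟩ := csplit hP htr
            refine ⟨m, Exec.single t1, ?_⟩
            have := Exec.cons t2 hex
            rw [tcat_delay_delay] at this
            have hd : dsum ⟨g.1 - x, hpos⟩ hh = ⟨y, hy⟩ := by
              apply Subtype.ext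
              simp [dsum]
              linarith
            rwa [hd] at this

/-- Decomposition of executions along prefixes. -/
lemma dec (hP : WF P) :
    ∀ (w₀ : TWord Act) {w₁ w : TWord Act} {s t : St P.complete.Sig},
      Exec P.complete s w t → tcat w₀ w₁ = w →
      ∃ s' v, Exec P.complete s w₀ s' ∧ Exec P.complete s' v t ∧ tcat w₀ v = w := by
  intro w₀
  induction w₀ with
  | nil =>
    intro w₁ w s t h heq
    exact ⟨s, w, Exec.nil s, h, nil_tcat w⟩
  | cons β rest ih =>
    intro w₁ w s t h heq
    cases β with
    | act a =>
      have hw : w = TAct.act a :: tcat rest w₁ := by rw [← heq, tcat_act_cons]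
      obtain ⟨m, hm, hex2⟩ := exec_act_cons (hw ▸ h)
      obtain ⟨s', v, e1, e2, e3⟩ := ih hex2 rfl
      refine ⟨s', v, ?_, e2, ?_⟩
      · have := Exec.cons hm e1
        rwa [tcat_act] at this
      · rw [tcat_act_cons, e3, ← hw]
    | delay d =>
      cases rest with
      | cons r1 rs =>
        have hne : (r1 :: rs : TWord Act) ≠ [] := by simp
        have hw : w = TAct.delay d :: tcat (r1 :: rs) w₁ := by
          rw [← heq, tcat_cons _ _ hne]
        cases r1 with
        | delay e1 =>
          exfalso
          obtain ⟨e', r', hr⟩ := tcat_head_delay e1 rs w₁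
          have hwf := exec_istword h
          rw [hw, hr] at hwf
          have := List.isChain_cons_cons.mp hwf
          simp [TAct.isDelay] at this
        | act a1 =>
          obtain ⟨m, e0, hex2⟩ := exec_delay_cons (hw ▸ h)
          obtain ⟨s', v, e1, e2, e3⟩ := ih hex2 rfl
          refine ⟨s', v, ?_, e2, ?_⟩
          · have := e0.append e1
            rwa [show tcat [TAct.delay d] (TAct.act a1 :: rs) =
              TAct.delay d :: TAct.act a1 :: rs from rfl] at this
          · rw [tcat_cons _ _ hne, e3, ← hw]
      | nil =>
        cases hw₁ : w₁ with
        | cons y ws =>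
          cases y with
          | delay e =>
            subst hw₁
            have hw : w = TAct.delay (dsum d e) :: ws := by rw [← heq]; rfl
            obtain ⟨m', e0, hex2⟩ := exec_delay_cons (hw ▸ h)
            obtain ⟨m, e1, e2⟩ := exec_delay_split hP e0 (dsum d e) d.1 e.1 d.2 e.2 rfl rfl
            have hd : (⟨d.1, d.2⟩ : Delay) = d := rfl
            have he : (⟨e.1, e.2⟩ : Delay) = e := rfl
            rw [hd] at e1
            rw [he] at e2
            refine ⟨m, tcat [TAct.delay e] ws, e1, e2.append hex2, ?_⟩
            have hstep : tcat [TAct.delay (dsum d e)] ws = TAct.delay (dsum d e) :: ws := by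
              apply tcat_single
              rintro f g r hfg rfl
              have hwf := exec_istword h
              rw [hw] at hwf
              have := List.isChain_cons_cons.mp hwf
              simp [TAct.isDelay] at this
            rw [← tcat_single_assoc, tcat_delay_delay, hstep, ← hw]
          | act a =>
            subst hw₁
            have hw : w = TAct.delay d :: TAct.act a :: ws := by rw [← heq]; rfl
            obtain ⟨m, e0, hex2⟩ := exec_delay_cons (hw ▸ h)
            exact ⟨m, TAct.act a :: ws, e0, hex2, heq⟩
        | nil =>
          subst hw₁
          have hw : w = [TAct.delay d] := by rw [← heq]; rfl
          obtain ⟨m, e0, hex2⟩ := exec_delay_cons (hw ▸ h)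
          exact ⟨m, [], e0, hex2, heq⟩

end CompleteLemmas

/-- Closure properties of the triple-trace structure:
(1) `TE` is extension-closed; (2) `TT` is non-empty and prefix-closed;
(3) `TR` is prefix-closed and fully branching w.r.t. `TT`;
(4) `TT ∖ TR` is time-extension closed; (5) any two traces in `TT ∖ TR` related by
extension are related by time-extension. -/
theorem triple_trace_structure_properties {Act : Type} (P : TIOTS Act) (hP : WF P) :
    (∀ w w', w ∈ TEset P → w' ∈ Ext P.A {w} → w' ∈ TEset P) ∧
    ((TTset P).Nonempty ∧ ∀ w₀ w, Pref w₀ w → w ∈ TTset P → w₀ ∈ TTset P) ∧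
    ((∀ w₀ w, Pref w₀ w → w ∈ TRset P → w₀ ∈ TRset P) ∧
      ∀ w ∈ TRset P, ∀ α, TAct.valid P.A α → tcat w [α] ∈ TTset P) ∧
    (∀ w ∈ TTset P \ TRset P, ∀ d : Delay, tcat w [TAct.delay d] ∈ TTset P \ TRset P) ∧
    (∀ w w', w ∈ TTset P \ TRset P → w' ∈ TTset P \ TRset P → w' ∈ Ext P.A {w} →
      TimeExt w w') := by
  have hTT : ∀ {w : TWord Act} {s}, Exec P.complete P.complete.init w s → w ∈ TTset P := by
    intro w s h
    cases s with
    | plain p => exact Or.inl (Or.inr ⟨p, h⟩)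
    | bot => exact Or.inl (Or.inl h)
    | top => exact Or.inr h
  have hTTex : ∀ {w : TWord Act}, w ∈ TTset P →
      ∃ s, Exec P.complete P.complete.init w s := by
    rintro w ((h | ⟨p, h⟩) | h)
    exacts [⟨_, h⟩, ⟨_, h⟩, ⟨_, h⟩]
  have hTRtop : ∀ {w : TWord Act} {s}, w ∉ TRset P →
      Exec P.complete P.complete.init w s → s = .top := by
    intro w s hw h
    cases s with
    | plain p => exact absurd (Or.inr ⟨p, h⟩) hw
    | bot => exact absurd (Or.inl h) hw
    | top => rfl
  refine ⟨?_, ⟨⟨[], hTT (Exec.nil _)⟩, ?_⟩, ⟨?_, ?_⟩, ?_, ?_⟩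
  · -- (1) TE extension-closed
    rintro w w' hw ⟨w₀, hw₀, w₁, ⟨hwf, hval⟩, rfl⟩
    cases hw₀
    exact (hw.append (cbot_exec hP w₁ hwf hval) : _)
  · -- (2) TT prefix-closed
    rintro w₀ w ⟨w₁, heq⟩ hw
    obtain ⟨s, hs⟩ := hTTex hw
    obtain ⟨s', v, e1, _, _⟩ := dec hP w₀ hs heq
    exact hTT e1
  · -- (3a) TR prefix-closed
    rintro w₀ w ⟨w₁, heq⟩ hw
    have hex : ∃ s, Exec P.complete P.complete.init w s ∧ s ≠ St.top := by
      rcases hw with h | ⟨p, h⟩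
      · exact ⟨_, h, by simp⟩
      · exact ⟨_, h, by simp⟩
    obtain ⟨s, hs, hstop⟩ := hex
    obtain ⟨s', v, e1, e2, _⟩ := dec hP w₀ hs heq
    cases s' with
    | plain p => exact Or.inr ⟨p, e1⟩
    | bot => exact Or.inl e1
    | top => exact absurd (ctop_closed hP e2 rfl).1 hstop
  · -- (3b) full branching
    rintro w (hw | ⟨p, hw⟩) α hα
    · exact hTT (hw.append (Exec.single ((cbot_tr hP α .bot).mpr ⟨hα, rfl⟩)))
    · obtain ⟨s', hs'⟩ := cplain_enabled hP p α hα
      exact hTT (hw.append (Exec.single hs'))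
  · -- (4) TT \ TR time-extension closed
    rintro w ⟨hwTT, hwTR⟩ d
    obtain ⟨s, hs⟩ := hTTex hwTT
    have hstop := hTRtop hwTR hs
    subst hstop
    constructor
    · exact hTT (hs.append (Exec.single ((ctop_tr hP _ _).mpr ⟨trivial, rfl⟩)))
    · intro hmem
      have hex : ∃ t, Exec P.complete P.complete.init (tcat w [TAct.delay d]) t ∧
          t ≠ St.top := by
        rcases hmem with h | ⟨p, h⟩
        · exact ⟨_, h, by simp⟩
        · exact ⟨_, h, by simp⟩
      obtain ⟨t, ht, httop⟩ := hex
      obtain ⟨s', v, e1, e2, _⟩ := dec hP w ht rfl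
      have : s' = St.top := hTRtop hwTR e1
      subst this
      exact httop (ctop_closed hP e2 rfl).1
  · -- (5) time-extension relation
    rintro w w' ⟨hwTT, hwTR⟩ ⟨hw'TT, _⟩ ⟨w₀, hw₀, w₁, _, rfl⟩
    cases hw₀
    obtain ⟨t, ht⟩ := hTTex hw'TT
    obtain ⟨s', v, e1, e2, e3⟩ := dec hP w ht rfl
    have : s' = St.top := hTRtop hwTR e1
    subst this
    obtain ⟨-, hv | ⟨D, hv⟩⟩ := ctop_closed hP e2 rfl
    · subst hv
      rw [tcat_nil] at e3
      exact Or.inl e3.symm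
    · subst hv
      exact Or.inr ⟨D, e3.symm⟩

end TSpec
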